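/- arXiv:2206.05256 — 4 statements merged into one kernel-verified Lean document; each statement's English description precedes it below -/
import Mathlib

section
/- Let 1 ≤ k ≤ n and ℓ ≥ 1 be integers and let C be an (n,k)-code over a field F. Then C is MDS(ℓ) if and only if C is GZP(ℓ). -/
/-!
STATEMENT 2: A code C is MDS(ℓ) iff it is GZP(ℓ).
-/

open Finset

noncomputable section

/-- `G_A`: the span of the columns of `G` indexed by `A`. -/
def colSpan {K : Type*} [Field K] {k n : ℕ} (G : Matrix (Fin k) (Fin n) K)
    (A : Finset (Fin n)) : Submodule K (Fin k → K) :=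
  Submodule.span K ((fun j i => G i j) '' (A : Set (Fin n)))

/-- The value `Σ_{p ∈ P} |∩_{j ∈ p} A_j| − (s − 1)·k` associated to a partition `P`. -/
def partVal {ℓ n : ℕ} (k : ℕ) (A : Fin ℓ → Finset (Fin n))
    (P : Finpartition (Finset.univ : Finset (Fin ℓ))) : ℤ :=
  (∑ p ∈ P.parts, ((p.inf A).card : ℤ)) - ((P.parts.card : ℤ) - 1) * k

/-- `G` is a generator matrix of the code `C`: its rows form a basis of `C`. -/
def IsGenMatrix {F : Type*} [Field F] {k n : ℕ} (C : Submodule F (Fin n → F))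
    (G : Matrix (Fin k) (Fin n) F) : Prop :=
  LinearIndependent F (fun i => G i) ∧ Submodule.span F (Set.range fun i => G i) = C

/-- `C` is `MDS(ℓ)`. -/
def IsMDS {F : Type*} [Field F] (n k ℓ : ℕ) (C : Submodule F (Fin n → F)) : Prop :=
  ∀ G : Matrix (Fin k) (Fin n) F, IsGenMatrix C G →
    ∀ A : Fin ℓ → Finset (Fin n), (∀ i, (A i).card ≤ k) →
      IsGreatest {v : ℤ | ∃ P : Finpartition (Finset.univ : Finset (Fin ℓ)), v = partVal k A P}
        ((Module.finrank F ↥(⨅ i, colSpan G (A i))) : ℤ)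

/-- `S = (S_1, …, S_k)` is a generic zero pattern: `|∩_{i ∈ I} S_i| ≤ k − |I|` for
every nonempty `I ⊆ [k]`. -/
def IsGenericZP {k n : ℕ} (S : Fin k → Finset (Fin n)) : Prop :=
  ∀ I : Finset (Fin k), I.Nonempty → (I.inf S).card ≤ k - I.card

/-- The order of a zero pattern: the number of distinct nonempty sets among the `S_i`. -/
def patternOrder {k n : ℕ} (S : Fin k → Finset (Fin n)) : ℕ :=
  ((Finset.univ.image S).erase ∅).card

/-- `G` attains the zero pattern `S`: some invertible `M` makes `(M·G) i j = 0` for all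
`i` and all `j ∈ S i`. -/
def Attains {F : Type*} [Field F] {k n : ℕ} (G : Matrix (Fin k) (Fin n) F)
    (S : Fin k → Finset (Fin n)) : Prop :=
  ∃ M : Matrix (Fin k) (Fin k) F, IsUnit M.det ∧ ∀ i j, j ∈ S i → (M * G) i j = 0

/-- `C` is `GZP(ℓ)`: `C` is MDS (every `k` columns of a generator matrix span everything)
and every generator matrix attains every generic zero pattern of order at most `ℓ`. -/
def IsGZP {F : Type*} [Field F] (n k ℓ : ℕ) (C : Submodule F (Fin n → F)) : Prop :=
  ∀ G : Matrix (Fin k) (Fin n) F, IsGenMatrix C G →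
    (∀ A : Finset (Fin n), A.card = k → colSpan G A = ⊤) ∧
    (∀ S : Fin k → Finset (Fin n), IsGenericZP S → patternOrder S ≤ ℓ → Attains G S)


/-!
Both conditions only concern a single generator matrix `G`. Attaining a zero pattern `S` amounts
to choosing `k` linearly independent functionals, the `i`-th vanishing on the columns in `S i`;
by Rado's theorem for subspaces this is possible iff `dim (⋂_{i ∈ I} G_{S i}) + |I| ≤ k` for every
set `I` of rows. For a generic pattern of order at most `ℓ`, `MDS(ℓ)` evaluates the left-hand side
as the value of a partition, and genericity bounds the contribution of each part.

Conversely, once every `k` columns are independent, the value of a partition is always a lower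
bound for `dim (⋂_t G_{A t})`. For the upper bound, allot `m t` rows to each `A t` so that any
nonempty `T` receives at most `k - |⋂_{t ∈ T} A t|` rows in total. This function of `T` is
intersecting-submodular, so a maximal allotment is tight on the parts of some partition. The
block pattern giving those rows the zero sets `A t` is generic, and attaining it cuts the
dimension down to the value of that partition.
-/

open Module

namespace Submodule

variable {K V : Type*} [Field K] [AddCommGroup V] [Module K V]

theorem finrank_add_finrank_le_finrank_inf_add [FiniteDimensional K V] (X Y : Submodule K V) :
    finrank K X + finrank K Y ≤ finrank K ↥(X ⊓ Y) + finrank K V := by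
  have := finrank_sup_add_finrank_inf_eq X Y
  have := (X ⊔ Y).finrank_le
  omega

theorem sum_finrank_sub_le_finrank_finsetInf [FiniteDimensional K V] {α : Type*}
    (s : Finset α) (W : α → Submodule K V) :
    ∑ a ∈ s, (finrank K (W a) : ℤ) - (#s - 1) * finrank K V ≤ finrank K ↥(s.inf W) := by
  induction s using Finset.cons_induction with
  | empty => rw [inf_empty, finrank_top]; simp
  | cons a s ha ih =>
    have := finrank_add_finrank_le_finrank_inf_add (W a) (s.inf W)
    rw [sum_cons, card_cons, inf_cons]
    push_cast
    linarith

theorem dualAnnihilator_finsetInf {α : Type*} (s : Finset α) (W : α → Submodule K V) :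
    (s.inf W).dualAnnihilator = s.sup fun a => (W a).dualAnnihilator := by
  induction s using Finset.cons_induction with
  | empty => simp
  | cons a s ha ih => rw [inf_cons, sup_cons, Subspace.dualAnnihilator_inf_eq, ih]

def HallCondition {ι : Type*} (W : ι → Submodule K V) : Prop :=
  ∀ I : Finset ι, #I ≤ finrank K ↥(I.sup W)

theorem hallCondition_of_linearIndependent [FiniteDimensional K V] {ι : Type*}
    {W : ι → Submodule K V} {v : ι → V} (hv : LinearIndependent K v) (hvW : ∀ i, v i ∈ W i) :
    HallCondition W := by
  intro I
  calc #I = finrank K ↥(span K (Set.range (v ∘ ((↑) : I → ι)))) := by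
        rw [finrank_span_eq_card (hv.comp _ Subtype.val_injective), Fintype.card_coe]
    _ ≤ finrank K ↥(I.sup W) := by
        refine finrank_mono (span_le.2 ?_)
        rintro _ ⟨i, rfl⟩
        exact le_sup (f := W) i.2 (hvW i)

section Rado

variable [FiniteDimensional K V] {ι : Type*}

theorem HallCondition.exists_linearIndependent_of_finrank_le_one [Fintype ι]
    {W : ι → Submodule K V} (hW : HallCondition W) (hW₁ : ∀ i, finrank K (W i) ≤ 1) :
    ∃ v : ι → V, (∀ i, v i ∈ W i) ∧ LinearIndependent K v := by
  have hline : ∀ i, ∃ x, K ∙ x = W i := by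
    intro i
    have hrank : finrank K (W i) = 1 := (hW₁ i).antisymm (by simpa using hW {i})
    obtain ⟨x, hx, hx0⟩ := exists_mem_ne_zero_of_ne_bot (p := W i) fun h => by
      rw [h, finrank_bot] at hrank; exact zero_ne_one hrank
    exact ⟨x, eq_of_le_of_finrank_eq ((span_singleton_le_iff_mem x _).2 hx)
      (by rw [finrank_span_singleton hx0, hrank])⟩
  choose v hv using hline
  refine ⟨v, fun i => hv i ▸ mem_span_singleton_self (v i), ?_⟩
  have hspan : span K (Set.range v) = univ.sup W := by
    rw [span_range_eq_iSup, sup_univ_eq_iSup]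
    exact iSup_congr hv
  rw [linearIndependent_iff_card_eq_finrank_span]
  refine le_antisymm ?_ (finrank_range_le_card v)
  rw [Set.finrank, hspan]
  simpa using hW univ

theorem exists_sup_eq_of_two_le_finrank (W : Submodule K V) (hW : 2 ≤ finrank K W) :
    ∃ U₁ U₂ : Submodule K V,
      U₁ ⊔ U₂ = W ∧ finrank K U₁ < finrank K W ∧ finrank K U₂ < finrank K W := by
  classical
  set b := Module.finBasis K W
  let U : Fin (finrank K W) → Submodule K V := fun j => span K ((fun i => (b i : V)) '' {j}ᶜ)
  have hU : ∀ j, finrank K (U j) < finrank K W := by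
    intro j
    calc finrank K (U j) ≤ #(({j}ᶜ : Finset _).image fun i => (b i : V)) := by
          have := finrank_span_finset_le_card (R := K)
            (({j}ᶜ : Finset _).image fun i => (b i : V))
          rwa [coe_image, coe_compl, coe_singleton] at this
      _ ≤ #({j}ᶜ : Finset _) := card_image_le
      _ < finrank K W := by rw [card_compl, card_singleton, Fintype.card_fin]; omega
  refine ⟨U ⟨0, by omega⟩, U ⟨1, by omega⟩, ?_, hU _, hU _⟩
  rw [← span_union, ← Set.image_union, ← Set.compl_inter,
    Set.singleton_inter_eq_empty.2 (by simp [Fin.ext_iff]), Set.compl_empty, Set.image_univ]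
  have := congrArg (map W.subtype) b.span_eq
  rwa [map_span, map_subtype_top, ← Set.range_comp] at this

theorem HallCondition.update_or [DecidableEq ι] {W : ι → Submodule K V} (hW : HallCondition W)
    {i₀ : ι} {U₁ U₂ : Submodule K V} (hU : U₁ ⊔ U₂ = W i₀) :
    HallCondition (Function.update W i₀ U₁) ∨ HallCondition (Function.update W i₀ U₂) := by
  have deficient : ∀ U, ¬ HallCondition (Function.update W i₀ U) →
      ∃ I : Finset ι, i₀ ∉ I ∧ finrank K ↥(U ⊔ I.sup W) ≤ #I := by
    intro U hU
    simp only [HallCondition, not_forall, not_le] at hU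
    obtain ⟨L, hL⟩ := hU
    have hsup : ∀ I : Finset ι, i₀ ∉ I → I.sup (Function.update W i₀ U) = I.sup W := fun I hI =>
      sup_congr rfl fun i hi => Function.update_of_ne (ne_of_mem_of_not_mem hi hI) _ _
    by_cases hi₀ : i₀ ∈ L
    · refine ⟨L.erase i₀, notMem_erase _ _, ?_⟩
      rw [← insert_erase hi₀, sup_insert, Function.update_self, hsup _ (notMem_erase _ _),
        card_insert_of_notMem (notMem_erase _ _)] at hL
      omega
    · exact absurd (hW L) (by rw [← hsup L hi₀]; omega)
  -- Two deficient sets, one for each update, would violate Hall's condition for `W` on their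
  -- union and intersection, by the modular law for dimensions.
  by_contra! h
  obtain ⟨I, hI, hI₁⟩ := deficient U₁ h.1
  obtain ⟨J, hJ, hJ₂⟩ := deficient U₂ h.2
  have hsup : (U₁ ⊔ I.sup W) ⊔ (U₂ ⊔ J.sup W) = (insert i₀ (I ∪ J)).sup W := by
    rw [sup_insert, sup_union, ← hU, sup_sup_sup_comm]
  have hinf : (I ∩ J).sup W ≤ (U₁ ⊔ I.sup W) ⊓ (U₂ ⊔ J.sup W) :=
    le_inf ((sup_mono inter_subset_left).trans le_sup_right)
      ((sup_mono inter_subset_right).trans le_sup_right)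
  have hcard : #(insert i₀ (I ∪ J)) + #(I ∩ J) = #I + #J + 1 := by
    rw [card_insert_of_notMem (by simp [hI, hJ]), ← card_union_add_card_inter]
    ring
  have := finrank_sup_add_finrank_inf_eq (U₁ ⊔ I.sup W) (U₂ ⊔ J.sup W)
  have := hW (insert i₀ (I ∪ J))
  have := hW (I ∩ J)
  have := finrank_mono hinf
  rw [hsup] at *
  omega

/-- Rado's theorem for subspaces. -/
theorem HallCondition.exists_linearIndependent [Fintype ι] [DecidableEq ι]
    {W : ι → Submodule K V} (hW : HallCondition W) :
    ∃ v : ι → V, (∀ i, v i ∈ W i) ∧ LinearIndependent K v := by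
  induction hN : ∑ i, finrank K (W i) using Nat.strong_induction_on generalizing W with
  | _ N ih =>
  by_cases hW₁ : ∀ i, finrank K (W i) ≤ 1
  · exact hW.exists_linearIndependent_of_finrank_le_one hW₁
  push Not at hW₁
  obtain ⟨i₀, hi₀⟩ := hW₁
  obtain ⟨U₁, U₂, hU, hU₁, hU₂⟩ := exists_sup_eq_of_two_le_finrank (W i₀) hi₀
  have shrink : ∀ U ≤ W i₀, finrank K U < finrank K (W i₀) →
      HallCondition (Function.update W i₀ U) →
      ∃ v : ι → V, (∀ i, v i ∈ W i) ∧ LinearIndependent K v := by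
    intro U hUW hUlt hUHall
    have hle : Function.update W i₀ U ≤ W := update_le_self_iff.2 hUW
    have hlt : ∑ i, finrank K (Function.update W i₀ U i) < N :=
      hN ▸ sum_lt_sum (fun i _ => finrank_mono (hle i))
        ⟨i₀, mem_univ _, by rwa [Function.update_self]⟩
    obtain ⟨v, hv, hind⟩ := ih _ hlt hUHall rfl
    exact ⟨v, fun i => hle i (hv i), hind⟩
  rcases hW.update_or hU with h | h
  · exact shrink U₁ (hU ▸ le_sup_left) hU₁ h
  · exact shrink U₂ (hU ▸ le_sup_right) hU₂ h

theorem hallCondition_iff_exists_linearIndependent [Fintype ι] [DecidableEq ι]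
    {W : ι → Submodule K V} :
    HallCondition W ↔ ∃ v : ι → V, (∀ i, v i ∈ W i) ∧ LinearIndependent K v :=
  ⟨HallCondition.exists_linearIndependent, fun ⟨_, hvW, hv⟩ =>
    hallCondition_of_linearIndependent hv hvW⟩

end Rado

end Submodule

section ColSpan

variable {F : Type*} [Field F] {k n : ℕ} (G : Matrix (Fin k) (Fin n) F)

theorem colSpan_mono {A B : Finset (Fin n)} (h : A ⊆ B) : colSpan G A ≤ colSpan G B :=
  Submodule.span_mono (Set.image_mono (coe_subset.2 h))

theorem colSpan_empty : colSpan G ∅ = ⊥ := by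
  simp [colSpan]

theorem colSpan_union (A B : Finset (Fin n)) :
    colSpan G (A ∪ B) = colSpan G A ⊔ colSpan G B := by
  rw [colSpan, colSpan, colSpan, ← Submodule.span_union, ← Set.image_union, coe_union]

theorem finrank_colSpan_le_card (A : Finset (Fin n)) : finrank F (colSpan G A) ≤ #A := by
  classical
  rw [colSpan, ← coe_image]
  exact (finrank_span_finset_le_card _).trans card_image_le

theorem finrank_colSpan_of_card_le (hkn : k ≤ n)
    (hG : ∀ B : Finset (Fin n), #B = k → colSpan G B = ⊤) {A : Finset (Fin n)} (hA : #A ≤ k) :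
    finrank F (colSpan G A) = #A := by
  obtain ⟨B, hAB, hB⟩ := exists_superset_card_eq hA (by simpa using hkn)
  have hsplit : colSpan G A ⊔ colSpan G (B \ A) = ⊤ := by
    rw [← colSpan_union, union_sdiff_of_subset hAB, hG B hB]
  have := Submodule.finrank_sup_add_finrank_inf_eq (colSpan G A) (colSpan G (B \ A))
  rw [hsplit, finrank_top, finrank_fin_fun] at this
  have := finrank_colSpan_le_card G A
  have := finrank_colSpan_le_card G (B \ A)
  rw [card_sdiff_of_subset hAB] at this
  omega

theorem mem_dualAnnihilator_colSpan {A : Finset (Fin n)} {φ : Module.Dual F (Fin k → F)} :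
    φ ∈ (colSpan G A).dualAnnihilator ↔ ∀ j ∈ A, φ (fun i => G i j) = 0 := by
  rw [Submodule.mem_dualAnnihilator]
  change colSpan G A ≤ LinearMap.ker φ ↔ _
  rw [colSpan, Submodule.span_le, Set.image_subset_iff]
  rfl

theorem attains_iff_exists_linearIndependent {S : Fin k → Finset (Fin n)} :
    Attains G S ↔ ∃ φ : Fin k → Module.Dual F (Fin k → F),
      (∀ i, φ i ∈ (colSpan G (S i)).dualAnnihilator) ∧ LinearIndependent F φ := by
  set e := dotProductEquiv F (Fin k)
  have hMG : ∀ (M : Matrix (Fin k) (Fin k) F) i j, (M * G) i j = e (M i) (fun q => G q j) :=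
    fun M i j => Matrix.mul_apply' ..
  have hrows : ∀ M : Matrix (Fin k) (Fin k) F,
      LinearIndependent F (fun i => e (M i)) ↔ IsUnit M.det := fun M => by
    rw [← Matrix.isUnit_iff_isUnit_det, ← Matrix.linearIndependent_rows_iff_isUnit]
    exact e.toLinearMap.linearIndependent_iff e.ker
  constructor
  · rintro ⟨M, hM, hMS⟩
    refine ⟨fun i => e (M i), fun i => ?_, (hrows M).2 hM⟩
    exact (mem_dualAnnihilator_colSpan G).2 fun j hj => hMG M i j ▸ hMS i j hj
  · rintro ⟨φ, hφS, hφ⟩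
    have hφM : (fun i => e (Matrix.of (fun i => e.symm (φ i)) i)) = φ :=
      funext fun i => e.apply_symm_apply (φ i)
    refine ⟨Matrix.of fun i => e.symm (φ i), (hrows _).1 (by rwa [hφM]), fun i j hj => ?_⟩
    rw [hMG, congrFun hφM i]
    exact (mem_dualAnnihilator_colSpan G).1 (hφS i) j hj

theorem attains_iff_finrank_finsetInf_add_card_le {S : Fin k → Finset (Fin n)} :
    Attains G S ↔
      ∀ I : Finset (Fin k), finrank F ↥(I.inf fun i => colSpan G (S i)) + #I ≤ k := by
  rw [attains_iff_exists_linearIndependent, ← Submodule.hallCondition_iff_exists_linearIndependent]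
  refine forall_congr' fun I => ?_
  have := Subspace.finrank_add_finrank_dualAnnihilator_eq (I.inf fun i => colSpan G (S i))
  rw [Submodule.dualAnnihilator_finsetInf, finrank_fin_fun] at this
  omega

end ColSpan
theorem Finset.card_inf_add_card_inf_le {ι α : Type*} [DecidableEq ι] [DecidableEq α]
    [Fintype α] (T T' : Finset ι) (A : ι → Finset α) :
    #(T.inf A) + #(T'.inf A) ≤ #((T ∪ T').inf A) + #((T ∩ T').inf A) := by
  rw [inf_union, ← card_union_add_card_inter, add_comm]
  exact add_le_add_right (card_le_card
    (union_subset (inf_mono inter_subset_left) (inf_mono inter_subset_right))) _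

theorem Finset.exists_range_eq_of_card_le {α : Type*} {s : Finset α} (hs : s.Nonempty) {ℓ : ℕ}
    (h : #s ≤ ℓ) : ∃ A : Fin ℓ → α, Set.range A = s := by
  have : Nonempty (Fin #s) := ⟨⟨0, hs.card_pos⟩⟩
  refine ⟨(↑) ∘ s.equivFin.symm ∘ Function.invFun (Fin.castLE h), ?_⟩
  rw [Set.range_comp, Set.range_comp,
    (Function.invFun_surjective (Fin.castLE_injective h)).range_eq, Set.image_univ,
    Equiv.range_eq_univ, Set.image_univ, Subtype.range_coe]

theorem Finpartition.exists_forall_mem_parts {ι : Type*} [Fintype ι] [DecidableEq ι]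
    (𝒯 : Finset ι → Prop) (hcover : ∀ i, ∃ T, i ∈ T ∧ 𝒯 T)
    (hunion : ∀ T T', 𝒯 T → 𝒯 T' → (T ∩ T').Nonempty → 𝒯 (T ∪ T')) :
    ∃ P : Finpartition (univ : Finset ι), ∀ p ∈ P.parts, 𝒯 p := by
  classical
  have hmax : ∀ i, ∃ U, (i ∈ U ∧ 𝒯 U) ∧ ∀ T, i ∈ T → 𝒯 T → #T ≤ #U := fun i => by
    obtain ⟨T, hT⟩ := hcover i
    obtain ⟨U, hU, hUmax⟩ := exists_max_image {T | i ∈ T ∧ 𝒯 T} card ⟨T, by simpa using hT⟩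
    exact ⟨U, by simpa using hU, fun T hiT hT => hUmax T (by simpa using ⟨hiT, hT⟩)⟩
  choose U hU hUmax using hmax
  have hmerge : ∀ i j, (U i ∩ U j).Nonempty → U i = U j := by
    intro i j hij
    have h𝒯 := hunion _ _ (hU i).2 (hU j).2 hij
    have hi := eq_of_subset_of_card_le subset_union_left
      (hUmax i _ (mem_union_left _ (hU i).1) h𝒯)
    have hj := eq_of_subset_of_card_le subset_union_right
      (hUmax j _ (mem_union_right _ (hU j).1) h𝒯)
    exact hi.trans hj.symm
  refine ⟨.ofExistsUnique (univ.image U) (fun _ _ => subset_univ _) (fun i _ => ?_) ?_, ?_⟩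
  · refine ⟨U i, ⟨mem_image_of_mem U (mem_univ i), (hU i).1⟩, ?_⟩
    rintro _ ⟨hp, hip⟩
    obtain ⟨j, -, rfl⟩ := mem_image.1 hp
    exact hmerge j i ⟨i, mem_inter.2 ⟨hip, (hU i).1⟩⟩
  · simp only [mem_image, not_exists, not_and]
    exact fun i _ h => by simpa [h] using (hU i).1
  · intro p hp
    obtain ⟨i, -, rfl⟩ := mem_image.1 hp
    exact (hU i).2

section Allocation

variable {ι : Type*} (f : Finset ι → ℤ)

def IsFeasible (m : ι → ℕ) : Prop :=
  ∀ T : Finset ι, T.Nonempty → ∑ i ∈ T, (m i : ℤ) ≤ f T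

theorem exists_isFeasible_isMax [Fintype ι] (hf : ∀ T : Finset ι, T.Nonempty → 0 ≤ f T) :
    ∃ m, IsFeasible f m ∧ ∀ m', IsFeasible f m' → ∑ i, (m' i : ℤ) ≤ ∑ i, (m i : ℤ) := by
  obtain ⟨_, ⟨m, hm, rfl⟩, hmax⟩ :=
    Int.exists_greatest_of_bdd (P := fun z => ∃ m, IsFeasible f m ∧ z = ∑ i, (m i : ℤ))
      ⟨∑ i, f {i}, by
        rintro _ ⟨m, hm, rfl⟩
        exact sum_le_sum fun i _ => by simpa using hm {i} (singleton_nonempty i)⟩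
      ⟨0, 0, fun T hT => by simpa using hf T hT, by simp⟩
  exact ⟨m, hm, fun m' hm' => hmax _ ⟨m', hm', rfl⟩⟩

variable {f} [DecidableEq ι]

theorem IsFeasible.exists_tight [Fintype ι] {m : ι → ℕ} (hm : IsFeasible f m)
    (hmax : ∀ m', IsFeasible f m' → ∑ i, (m' i : ℤ) ≤ ∑ i, (m i : ℤ)) (i : ι) :
    ∃ T, i ∈ T ∧ ∑ j ∈ T, (m j : ℤ) = f T := by
  by_contra! h
  set m' : ι → ℕ := fun j => m j + if j = i then 1 else 0
  have hsum : ∀ T : Finset ι,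
      ∑ j ∈ T, (m' j : ℤ) = ∑ j ∈ T, (m j : ℤ) + if i ∈ T then 1 else 0 := by
    intro T
    simp [m', sum_add_distrib]
  have hm' : IsFeasible f m' := fun T hT => by
    rw [hsum]
    split_ifs with hi
    · have := hm T hT
      have := h T hi
      omega
    · simpa using hm T hT
  have := hmax m' hm'
  rw [hsum, if_pos (mem_univ i)] at this
  omega

theorem IsFeasible.tight_union {m : ι → ℕ} (hm : IsFeasible f m)
    (hsub : ∀ T T' : Finset ι, (T ∩ T').Nonempty → f (T ∪ T') + f (T ∩ T') ≤ f T + f T')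
    {T T' : Finset ι} (hT : ∑ j ∈ T, (m j : ℤ) = f T) (hT' : ∑ j ∈ T', (m j : ℤ) = f T')
    (hTT' : (T ∩ T').Nonempty) : ∑ j ∈ T ∪ T', (m j : ℤ) = f (T ∪ T') := by
  have := sum_union_inter (s₁ := T) (s₂ := T') (f := fun j => (m j : ℤ))
  have := hm (T ∪ T') (hTT'.mono (inter_subset_left.trans subset_union_left))
  have := hm _ hTT'
  have := hsub T T' hTT'
  linarith

/-- The attainment half of Dilworth's min-max theorem for intersecting-submodular functions. -/
theorem exists_isFeasible_sum_eq_sum_parts [Fintype ι]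
    (hf : ∀ T : Finset ι, T.Nonempty → 0 ≤ f T)
    (hsub : ∀ T T' : Finset ι, (T ∩ T').Nonempty → f (T ∪ T') + f (T ∩ T') ≤ f T + f T') :
    ∃ m, IsFeasible f m ∧
      ∃ P : Finpartition (univ : Finset ι), ∑ i, (m i : ℤ) = ∑ p ∈ P.parts, f p := by
  obtain ⟨m, hm, hmax⟩ := exists_isFeasible_isMax f hf
  obtain ⟨P, hP⟩ := Finpartition.exists_forall_mem_parts (fun T => ∑ j ∈ T, (m j : ℤ) = f T)
    (hm.exists_tight hmax) fun _ _ => hm.tight_union hsub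
  refine ⟨m, hm, P, ?_⟩
  have := sum_biUnion (f := fun i => (m i : ℤ)) P.supIndep.pairwiseDisjoint
  rw [P.biUnion_parts] at this
  exact this.trans (sum_congr rfl hP)

end Allocation

section ZeroPattern

variable {k n : ℕ}

theorem IsGenericZP.partVal_add_card_le {ℓ : ℕ} {S : Fin k → Finset (Fin n)}
    (hS : IsGenericZP S) {I : Finset (Fin k)} {A : Fin ℓ → Finset (Fin n)}
    (hAS : ∀ t, ∃ i ∈ I, S i = A t) (hSA : ∀ i ∈ I, ∃ t, A t = S i)
    (P : Finpartition (univ : Finset (Fin ℓ))) : partVal k A P + #I ≤ k := by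
  let J : Finset (Fin ℓ) → Finset (Fin k) := fun p => {i ∈ I | ∃ t ∈ p, A t = S i}
  have hJ : ∀ p ∈ P.parts, #(p.inf A) + #(J p) ≤ k := by
    intro p hp
    obtain ⟨t, ht⟩ := P.nonempty_of_mem_parts hp
    obtain ⟨i, hi, hit⟩ := hAS t
    have hinf : (J p).inf S = p.inf A := by
      refine le_antisymm (Finset.le_inf fun t ht => ?_) (Finset.le_inf fun i hi => ?_)
      · obtain ⟨i, hi, hit⟩ := hAS t
        exact hit ▸ inf_le (mem_filter.2 ⟨hi, t, ht, hit.symm⟩)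
      · obtain ⟨-, t, ht, hit⟩ := mem_filter.1 hi
        exact hit ▸ inf_le ht
    have := hS (J p) ⟨i, mem_filter.2 ⟨hi, t, ht, hit.symm⟩⟩
    have := card_le_univ (J p)
    rw [hinf, Fintype.card_fin] at *
    omega
  have hcover : I ⊆ P.parts.biUnion J := by
    intro i hi
    obtain ⟨t, ht⟩ := hSA i hi
    obtain ⟨p, hp, htp⟩ := P.exists_mem (mem_univ t)
    exact mem_biUnion.2 ⟨p, hp, mem_filter.2 ⟨hi, t, htp, ht⟩⟩
  have hI := (card_le_card hcover).trans card_biUnion_le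
  have hsum := sum_le_sum hJ
  rw [sum_add_distrib, sum_const, smul_eq_mul] at hsum
  rw [partVal]
  zify at hI hsum
  linarith

def blockPattern {ι : Type*} (A : ι → Finset (Fin n)) (R : Finset (Fin k)) (τ : Fin k → ι) :
    Fin k → Finset (Fin n) :=
  fun i => if i ∈ R then A (τ i) else ∅

variable {ι : Type*} {A : ι → Finset (Fin n)} {R : Finset (Fin k)} {τ : Fin k → ι}

theorem isGenericZP_blockPattern [DecidableEq ι]
    (h : ∀ T : Finset ι, T.Nonempty → #{i ∈ R | τ i ∈ T} + #(T.inf A) ≤ k) :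
    IsGenericZP (blockPattern A R τ) := by
  intro I hI
  by_cases hIR : I ⊆ R
  · have hinf : I.inf (blockPattern A R τ) = (I.image τ).inf A := by
      rw [inf_image]
      exact inf_congr rfl fun i hi => if_pos (hIR hi)
    have hIT : I ⊆ {i ∈ R | τ i ∈ I.image τ} := fun i hi =>
      mem_filter.2 ⟨hIR hi, mem_image_of_mem τ hi⟩
    have := h _ (hI.image τ)
    have := card_le_card hIT
    rw [hinf]
    omega
  · obtain ⟨i, hi, hiR⟩ := not_subset.1 hIR
    have : I.inf (blockPattern A R τ) = ∅ :=
      subset_empty.1 ((inf_le hi).trans (by simp [blockPattern, hiR]))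
    simp [this]

theorem patternOrder_blockPattern_le [Fintype ι] :
    patternOrder (blockPattern A R τ) ≤ Fintype.card ι := by
  refine (card_le_card (t := univ.image A) ?_).trans card_image_le
  intro s hs
  obtain ⟨hs, i, -, rfl⟩ := by simpa using hs
  by_cases hi : i ∈ R
  · simp [blockPattern, hi]
  · simp [blockPattern, hi] at hs

theorem exists_card_filter_mem_eq_sum [Fintype ι] [DecidableEq ι] [Nonempty ι] (m : ι → ℕ)
    (hm : ∑ t, m t ≤ k) : ∃ (R : Finset (Fin k)) (τ : Fin k → ι),
      ∀ T : Finset ι, #{i ∈ R | τ i ∈ T} = ∑ t ∈ T, m t := by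
  obtain ⟨e⟩ := Function.Embedding.nonempty_of_card_le (α := Σ t, Fin (m t)) (β := Fin k)
    (by simpa using hm)
  set τ : Fin k → ι := Function.extend e Sigma.fst fun _ => Classical.arbitrary ι
  refine ⟨univ.map e, τ, fun T => ?_⟩
  have hfiber : (univ.filter fun x : Σ t, Fin (m t) => τ (e x) ∈ T) =
      T.sigma fun _ => univ := by
    ext ⟨t, r⟩
    simp [τ, e.injective.extend_apply]
  rw [filter_map, card_map]
  simpa [card_sigma] using congrArg card hfiber

end ZeroPattern

section Code

variable {F : Type*} [Field F] {k n : ℕ} (ℓ : ℕ) (G : Matrix (Fin k) (Fin n) F)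

def IsMDSMatrix : Prop :=
  ∀ A : Fin ℓ → Finset (Fin n), (∀ i, #(A i) ≤ k) →
    IsGreatest {v : ℤ | ∃ P : Finpartition (univ : Finset (Fin ℓ)), v = partVal k A P}
      (finrank F ↥(⨅ i, colSpan G (A i)) : ℤ)

def IsGZPMatrix : Prop :=
  (∀ A : Finset (Fin n), #A = k → colSpan G A = ⊤) ∧
    ∀ S : Fin k → Finset (Fin n), IsGenericZP S → patternOrder S ≤ ℓ → Attains G S

variable {ℓ G}

theorem IsMDSMatrix.colSpan_eq_top (hℓ : 1 ≤ ℓ) (h : IsMDSMatrix ℓ G) {A : Finset (Fin n)}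
    (hA : #A = k) : colSpan G A = ⊤ := by
  have : Nonempty (Fin ℓ) := ⟨⟨0, hℓ⟩⟩
  have hval :
      partVal k (fun _ => A) (.indiscrete (univ_nonempty (α := Fin ℓ)).ne_empty) = #A := by
    simp [partVal, Finpartition.indiscrete, inf_const univ_nonempty]
  have := (h (fun _ => A) fun _ => hA.le).2 ⟨_, hval.symm⟩
  rw [iInf_const, hA] at this
  refine Submodule.eq_top_of_finrank_eq (le_antisymm (Submodule.finrank_le _) ?_)
  rw [finrank_fin_fun]
  exact_mod_cast this

theorem IsMDSMatrix.finrank_finsetInf_add_card_le (h : IsMDSMatrix ℓ G)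
    {S : Fin k → Finset (Fin n)} (hS : IsGenericZP S) (hSℓ : patternOrder S ≤ ℓ)
    (I : Finset (Fin k)) : finrank F ↥(I.inf fun i => colSpan G (S i)) + #I ≤ k := by
  rcases I.eq_empty_or_nonempty with rfl | hI
  · rw [inf_empty, finrank_top, finrank_fin_fun, card_empty, add_zero]
  by_cases hempty : ∃ i ∈ I, S i = ∅
  · obtain ⟨i, hi, hSi⟩ := hempty
    have : (I.inf fun i => colSpan G (S i)) = ⊥ :=
      le_bot_iff.1 ((inf_le hi).trans (by rw [hSi, colSpan_empty]))
    rw [this, finrank_bot]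
    simpa using card_le_univ I
  push Not at hempty
  have hvals : #(I.image S) ≤ ℓ := by
    refine (card_le_card fun s hs => ?_).trans hSℓ
    obtain ⟨i, hi, rfl⟩ := mem_image.1 hs
    exact mem_erase.2 ⟨(hempty i hi).ne_empty, mem_image_of_mem S (mem_univ i)⟩
  obtain ⟨A, hA⟩ := exists_range_eq_of_card_le (hI.image S) hvals
  have hAS : ∀ t, ∃ i ∈ I, S i = A t := fun t => by
    simpa using (Set.ext_iff.1 hA (A t)).1 ⟨t, rfl⟩
  have hSA : ∀ i ∈ I, ∃ t, A t = S i := fun i hi =>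
    (Set.ext_iff.1 hA (S i)).2 (by simpa using ⟨i, hi, rfl⟩)
  have hAk : ∀ t, #(A t) ≤ k := fun t => by
    obtain ⟨i, -, hi⟩ := hAS t
    have := hS {i} (singleton_nonempty i)
    rw [inf_singleton, card_singleton, hi] at this
    omega
  have hinf : ⨅ t, colSpan G (A t) = I.inf fun i => colSpan G (S i) := by
    rw [← iInf_range (g := colSpan G), hA]
    simp only [mem_coe]
    rw [← Finset.inf_eq_iInf, inf_image]
    rfl
  obtain ⟨P, hP⟩ := (h A hAk).1
  have := hS.partVal_add_card_le hAS hSA P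
  rw [← hinf]
  omega

theorem IsMDSMatrix.attains (h : IsMDSMatrix ℓ G) {S : Fin k → Finset (Fin n)}
    (hS : IsGenericZP S) (hSℓ : patternOrder S ≤ ℓ) : Attains G S :=
  (attains_iff_finrank_finsetInf_add_card_le G).2 (h.finrank_finsetInf_add_card_le hS hSℓ)

theorem partVal_le_finrank_iInf_colSpan (hkn : k ≤ n)
    (hG : ∀ B : Finset (Fin n), #B = k → colSpan G B = ⊤) {A : Fin ℓ → Finset (Fin n)}
    (hA : ∀ t, #(A t) ≤ k) (P : Finpartition (univ : Finset (Fin ℓ))) :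
    partVal k A P ≤ finrank F ↥(⨅ t, colSpan G (A t)) := by
  have hparts : ∀ p ∈ P.parts, finrank F (colSpan G (p.inf A)) = #(p.inf A) := fun p hp => by
    obtain ⟨t, ht⟩ := P.nonempty_of_mem_parts hp
    exact finrank_colSpan_of_card_le G hkn hG ((card_le_card (inf_le ht)).trans (hA t))
  have hle : (P.parts.inf fun p => colSpan G (p.inf A)) ≤ ⨅ t, colSpan G (A t) := by
    refine le_iInf fun t => ?_
    obtain ⟨p, hp, ht⟩ := P.exists_mem (mem_univ t)
    exact (inf_le hp).trans (colSpan_mono G (inf_le ht))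
  calc partVal k A P = ∑ p ∈ P.parts, (finrank F (colSpan G (p.inf A)) : ℤ)
        - (#P.parts - 1) * finrank F (Fin k → F) := by
        rw [partVal, finrank_fin_fun]
        congr 1
        exact sum_congr rfl fun p hp => by rw [hparts p hp]
    _ ≤ finrank F ↥(P.parts.inf fun p => colSpan G (p.inf A)) :=
        Submodule.sum_finrank_sub_le_finrank_finsetInf _ _
    _ ≤ finrank F ↥(⨅ t, colSpan G (A t)) := by exact_mod_cast Submodule.finrank_mono hle

theorem finrank_iInf_colSpan_add_sum_le (hℓ : 1 ≤ ℓ)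
    (hG : ∀ S : Fin k → Finset (Fin n), IsGenericZP S → patternOrder S ≤ ℓ → Attains G S)
    {A : Fin ℓ → Finset (Fin n)} {m : Fin ℓ → ℕ}
    (hm : ∀ T : Finset (Fin ℓ), T.Nonempty → ∑ t ∈ T, m t + #(T.inf A) ≤ k) :
    finrank F ↥(⨅ t, colSpan G (A t)) + ∑ t, m t ≤ k := by
  have : Nonempty (Fin ℓ) := ⟨⟨0, hℓ⟩⟩
  obtain ⟨R, τ, hRτ⟩ := exists_card_filter_mem_eq_sum (k := k) m (by
    have := hm univ univ_nonempty
    omega)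
  have hgen : IsGenericZP (blockPattern A R τ) :=
    isGenericZP_blockPattern fun T hT => hRτ T ▸ hm T hT
  have hattains := hG _ hgen (patternOrder_blockPattern_le.trans (by simp))
  have hdim := (attains_iff_finrank_finsetInf_add_card_le G).1 hattains R
  have hle : ⨅ t, colSpan G (A t) ≤ R.inf fun i => colSpan G (blockPattern A R τ i) :=
    Finset.le_inf fun i hi => by simpa [blockPattern, hi] using iInf_le _ (τ i)
  have hR : #R = ∑ t, m t := by simpa using hRτ univ
  have := Submodule.finrank_mono hle
  omega

theorem exists_finrank_iInf_colSpan_le_partVal (hℓ : 1 ≤ ℓ)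
    (hG : ∀ S : Fin k → Finset (Fin n), IsGenericZP S → patternOrder S ≤ ℓ → Attains G S)
    {A : Fin ℓ → Finset (Fin n)} (hA : ∀ t, #(A t) ≤ k) :
    ∃ P : Finpartition (univ : Finset (Fin ℓ)),
      finrank F ↥(⨅ t, colSpan G (A t)) ≤ partVal k A P := by
  -- `f T` bounds the number of rows a generic pattern can give the zero set `⋂_{t ∈ T} A t`.
  set f : Finset (Fin ℓ) → ℤ := fun T => k - #(T.inf A)
  have hf : ∀ T : Finset (Fin ℓ), T.Nonempty → 0 ≤ f T := fun T ⟨t, ht⟩ => by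
    have := (card_le_card (inf_le ht)).trans (hA t)
    simp only [f]
    omega
  have hsub : ∀ T T' : Finset (Fin ℓ), (T ∩ T').Nonempty →
      f (T ∪ T') + f (T ∩ T') ≤ f T + f T' := fun T T' _ => by
      have := card_inf_add_card_inf_le T T' A
      simp only [f]
      omega
  obtain ⟨m, hm, P, hmP⟩ := exists_isFeasible_sum_eq_sum_parts hf hsub
  have hdim := finrank_iInf_colSpan_add_sum_le hℓ hG (A := A) (m := m) fun T hT => by
    have := hm T hT
    simp only [f, ← Nat.cast_sum] at this
    omega
  have hpart : ∑ p ∈ P.parts, f p = k - partVal k A P := by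
    simp only [f, partVal, sum_sub_distrib, sum_const]
    ring
  refine ⟨P, ?_⟩
  rw [hpart, ← Nat.cast_sum] at hmP
  omega

theorem isMDSMatrix_iff_isGZPMatrix (hkn : k ≤ n) (hℓ : 1 ≤ ℓ) :
    IsMDSMatrix ℓ G ↔ IsGZPMatrix ℓ G := by
  refine ⟨fun h => ⟨fun A hA => h.colSpan_eq_top hℓ hA, fun S hS hSℓ => h.attains hS hSℓ⟩,
    fun ⟨hspan, hattains⟩ A hA => ?_⟩
  obtain ⟨P, hP⟩ := exists_finrank_iInf_colSpan_le_partVal hℓ hattains hA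
  refine ⟨⟨P, hP.antisymm (partVal_le_finrank_iInf_colSpan hkn hspan hA P)⟩, ?_⟩
  rintro _ ⟨P', rfl⟩
  exact partVal_le_finrank_iInf_colSpan hkn hspan hA P'

end Code

theorem mds_iff_gzp_general {F : Type*} [Field F] (n k ℓ : ℕ)
    (hkn : k ≤ n) (hℓ : 1 ≤ ℓ)
    (C : Submodule F (Fin n → F)) :
    IsMDS n k ℓ C ↔ IsGZP n k ℓ C :=
  forall₂_congr fun _ _ => isMDSMatrix_iff_isGZPMatrix hkn hℓ

/-- A code `C` is `MDS(ℓ)` iff it is `GZP(ℓ)`. -/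
theorem mds_iff_gzp {F : Type*} [Field F] (n k ℓ : ℕ)
    (hk : 1 ≤ k) (hkn : k ≤ n) (hℓ : 1 ≤ ℓ)
    (C : Submodule F (Fin n → F)) (hC : Module.finrank F C = k) :
    IsMDS n k ℓ C ↔ IsGZP n k ℓ C :=
  mds_iff_gzp_general n k ℓ hkn hℓ C

end
end

section
/- Let 1 ≤ k ≤ n, let F be a field, and let W be the generic k×n matrix over K = Frac(F[x_{i,j} : i ∈ [k], j ∈ [n]]). Then for every generic zero pattern S = (S_1, …, S_k) for k×n matrices, there exists an invertible k×k matrix M over K such that (M·W)_{i,j} = 0 for every i ∈ [k] and every j ∈ S_i. In particular, the generic k×n matrix attains every generic zero pattern, so generic codes are GZP(ℓ) for every ℓ. -/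
open MvPolynomial Finset

noncomputable section

/-- `K = Frac(F[x_{i,j} : i ∈ [k], j ∈ [n]])`. -/
abbrev genK (F : Type*) [Field F] (k n : ℕ) : Type _ :=
  FractionRing (MvPolynomial (Fin k × Fin n) F)

/-- The generic `k × n` matrix `W` with `W i j = x_{i,j}`. -/
noncomputable def genW (F : Type*) [Field F] (k n : ℕ) :
    Matrix (Fin k) (Fin n) (genK F k n) :=
  fun i j => algebraMap (MvPolynomial (Fin k × Fin n) F) (genK F k n) (X (i, j))

/-!
Extend `S` to a generic zero pattern `T ⊇ S` with `|T i| = k - 1` for every `i`: a column can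
be added to a short row `i` unless every candidate is blocked by a tight set through `i`, and
then the intersection of these tight sets, again tight, violates the pattern condition once `i`
is removed from it. Row `i` of `M` is the vector of signed maximal minors of the columns `T i`
of `W`, which annihilates those columns (Laplace expansion of a matrix with a repeated column).
To see `det M ≠ 0`, specialise `x_{t,j} = 0` for `j ∈ T t`: then `M` becomes diagonal, and its
diagonal minors survive a further specialisation to permutation matrices, which Hall's theorem
extracts from the pattern condition.
-/

open Matrix

section Cofactor

variable {R S ι : Type*} [CommRing R] [CommRing S] {m : ℕ}

def cofactorVec (A : Matrix (Fin (m + 1)) ι R) (c : Fin m → ι) : Fin (m + 1) → R :=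
  fun t => (-1) ^ (t : ℕ) * (A.submatrix t.succAbove c).det

theorem cofactorVec_vecMul_apply (A : Matrix (Fin (m + 1)) ι R) (c : Fin m → ι) (l : Fin m) :
    (cofactorVec A c ᵥ* A) (c l) = 0 := by
  let B : Matrix (Fin (m + 1)) (Fin (m + 1)) R := A.submatrix id (Fin.cons (c l) c)
  have hB : B.det = 0 := det_zero_of_column_eq (Fin.succ_ne_zero l).symm fun _ => rfl
  rw [det_succ_column_zero] at hB
  rw [← hB, vecMul, dotProduct]
  refine sum_congr rfl fun t _ => ?_
  simp [cofactorVec, B, submatrix_submatrix, mul_right_comm]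

theorem cofactorVec_map (A : Matrix (Fin (m + 1)) ι R) (c : Fin m → ι) (f : R →+* S) :
    cofactorVec (A.map f) c = f ∘ cofactorVec A c := by
  ext t
  simp [cofactorVec, submatrix_map, RingHom.map_det]

theorem cofactorVec_apply_eq_zero (A : Matrix (Fin (m + 1)) ι R) (c : Fin m → ι)
    {i t : Fin (m + 1)} (hti : t ≠ i) (hA : ∀ l, A i (c l) = 0) : cofactorVec A c t = 0 := by
  obtain ⟨r, rfl⟩ := Fin.exists_succAbove_eq hti.symm
  exact mul_eq_zero_of_right _ (det_eq_zero_of_row_eq_zero (A := A.submatrix _ c) r hA)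

def cofactorMatrix (A : Matrix (Fin (m + 1)) ι R) (c : Fin (m + 1) → Fin m → ι) :
    Matrix (Fin (m + 1)) (Fin (m + 1)) R :=
  of fun i => cofactorVec A (c i)

theorem cofactorMatrix_mul_apply (A : Matrix (Fin (m + 1)) ι R) (c : Fin (m + 1) → Fin m → ι)
    (i : Fin (m + 1)) (l : Fin m) : (cofactorMatrix A c * A) i (c i l) = 0 :=
  cofactorVec_vecMul_apply A (c i) l

theorem cofactorMatrix_map (A : Matrix (Fin (m + 1)) ι R) (c : Fin (m + 1) → Fin m → ι)
    (f : R →+* S) : (cofactorMatrix A c).map f = cofactorMatrix (A.map f) c := by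
  ext i t
  simp [cofactorMatrix, cofactorVec_map]

end Cofactor

section Masked

variable {R m n : Type*} [CommRing R] [DecidableEq n]

def maskedMvPolynomialX (T : m → Finset n) : Matrix m n (MvPolynomial (m × n) R) :=
  of fun t j => if j ∈ T t then 0 else X (t, j)

theorem maskedMvPolynomialX_apply_of_mem {T : m → Finset n} {t : m} {j : n} (h : j ∈ T t) :
    maskedMvPolynomialX (R := R) T t j = 0 :=
  if_pos h

theorem maskedMvPolynomialX_eq_map (T : m → Finset n) :
    maskedMvPolynomialX (R := R) T =
      (mvPolynomialX m n R).map (eval₂Hom C fun p => if p.2 ∈ T p.1 then 0 else X p) := by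
  ext t j
  simp [maskedMvPolynomialX]

theorem det_submatrix_maskedMvPolynomialX_ne_zero [Nontrivial R] {k : ℕ} (T : m → Finset n)
    {ρ : Fin k → m} (hρ : Function.Injective ρ) {c : Fin k → n} (hc : Function.Injective c)
    (π : Equiv.Perm (Fin k)) (hπ : ∀ r, c (π r) ∉ T (ρ r)) :
    ((maskedMvPolynomialX (R := R) T).submatrix ρ c).det ≠ 0 := by
  classical
  let x : m × n → R := fun p => if ∃ r, ρ r = p.1 ∧ c (π r) = p.2 then 1 else 0
  have hx : ((maskedMvPolynomialX T).submatrix ρ c).map (eval x) = π.permMatrix R := by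
    ext r l
    have hxr : x (ρ r, c l) = if π r = l then 1 else 0 := by
      refine if_congr ⟨?_, ?_⟩ rfl rfl
      · rintro ⟨r', hr', hl⟩
        exact hρ hr' ▸ hc hl
      · rintro rfl
        exact ⟨r, rfl, rfl⟩
    by_cases hl : π r = l
    · subst hl
      simp [maskedMvPolynomialX, Equiv.Perm.permMatrix, hπ r, hxr]
    · simp [maskedMvPolynomialX, Equiv.Perm.permMatrix, apply_ite, hxr, hl]
  intro h
  have := congrArg (eval x) h
  rw [RingHom.map_det, RingHom.mapMatrix_apply, hx, det_permutation, map_zero] at this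
  rcases Int.units_eq_one_or (Equiv.Perm.sign π) with hs | hs <;> simp [hs] at this

end Masked

section GenericCofactor

variable {R n : Type*} [CommRing R] [IsDomain R] [DecidableEq n] {m : ℕ}
  {T : Fin (m + 1) → Finset n} {c : Fin (m + 1) → Fin m → n}

theorem det_cofactorMatrix_maskedMvPolynomialX_ne_zero (hcT : ∀ i l, c i l ∈ T i)
    (hc : ∀ i, Function.Injective (c i))
    (hπ : ∀ i, ∃ π : Equiv.Perm (Fin m), ∀ r, c i (π r) ∉ T (i.succAbove r)) :
    (cofactorMatrix (maskedMvPolynomialX (R := R) T) c).det ≠ 0 := by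
  have hdiag : cofactorMatrix (maskedMvPolynomialX (R := R) T) c =
      diagonal fun i => cofactorMatrix (maskedMvPolynomialX T) c i i := by
    refine Matrix.ext fun i t => ?_
    rcases eq_or_ne i t with rfl | hit
    · simp
    · rw [diagonal_apply_ne _ hit]
      exact cofactorVec_apply_eq_zero _ _ hit.symm fun l =>
        maskedMvPolynomialX_apply_of_mem (R := R) (hcT i l)
  rw [hdiag, det_diagonal, prod_ne_zero_iff]
  intro i _
  obtain ⟨π, hπi⟩ := hπ i
  exact mul_ne_zero (pow_ne_zero _ (neg_ne_zero.2 one_ne_zero))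
    (det_submatrix_maskedMvPolynomialX_ne_zero T Fin.succAbove_right_injective (hc i) π hπi)

theorem det_cofactorMatrix_mvPolynomialX_ne_zero (hcT : ∀ i l, c i l ∈ T i)
    (hc : ∀ i, Function.Injective (c i))
    (hπ : ∀ i, ∃ π : Equiv.Perm (Fin m), ∀ r, c i (π r) ∉ T (i.succAbove r)) :
    (cofactorMatrix (mvPolynomialX (Fin (m + 1)) n R) c).det ≠ 0 := by
  intro h
  apply det_cofactorMatrix_maskedMvPolynomialX_ne_zero (R := R) hcT hc hπ
  rw [maskedMvPolynomialX_eq_map, ← cofactorMatrix_map, ← RingHom.mapMatrix_apply,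
    ← RingHom.map_det, h, map_zero]

end GenericCofactor

section GenericZeroPattern

variable {k n : ℕ} {S : Fin k → Finset (Fin n)}

def IsTight (S : Fin k → Finset (Fin n)) (I : Finset (Fin k)) : Prop :=
  (I.inf S).card = k - I.card

theorem IsGenericZP.card_le (hS : IsGenericZP S) (i : Fin k) : (S i).card ≤ k - 1 := by
  simpa using hS {i} (singleton_nonempty i)

theorem IsGenericZP.isTight_inter (hS : IsGenericZP S) {i : Fin k} {I J : Finset (Fin k)}
    (hiI : i ∈ I) (hiJ : i ∈ J) (hI : IsTight S I) (hJ : IsTight S J) :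
    IsTight S (I ∩ J) := by
  have hunion : (I.inf S ∪ J.inf S).card ≤ ((I ∩ J).inf S).card :=
    card_le_card (union_subset (inf_mono inter_subset_left) (inf_mono inter_subset_right))
  have hinter : (I.inf S ∩ J.inf S).card ≤ k - (I ∪ J).card := by
    simpa [inf_union, inf_eq_inter] using hS _ ⟨i, mem_union_left _ hiI⟩
  have := card_union_add_card_inter (I.inf S) (J.inf S)
  have := card_union_add_card_inter I J
  have := hS (I ∩ J) ⟨i, mem_inter.2 ⟨hiI, hiJ⟩⟩
  have := card_le_univ (I ∪ J)
  simp only [IsTight, Fintype.card_fin] at *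
  omega

theorem IsGenericZP.exists_isTight_of_not_isGenericZP_update (hS : IsGenericZP S) {i : Fin k}
    {j : Fin n} (hbad : ¬ IsGenericZP (Function.update S i (insert j (S i)))) :
    ∃ I, i ∈ I ∧ IsTight S I ∧ j ∈ (I.erase i).inf S := by
  set S' := Function.update S i (insert j (S i))
  have hS' : ∀ t ≠ i, S' t = S t := fun t h => Function.update_of_ne h _ _
  obtain ⟨I, hI, hlt⟩ :
      ∃ I : Finset (Fin k), I.Nonempty ∧ k - I.card < (I.inf S').card := by
    simpa [IsGenericZP] using hbad
  have hle := hS I hI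
  have hsub : I.inf S' ⊆ insert j (I.inf S) := by
    intro x hx
    rw [mem_insert, mem_inf]
    refine or_iff_not_imp_left.2 fun hxj t ht => ?_
    have hxt := mem_inf.1 hx t ht
    rcases eq_or_ne t i with rfl | hti
    · simpa [S', hxj] using hxt
    · rwa [hS' t hti] at hxt
  have hjS : j ∉ I.inf S := by
    intro hj
    rw [insert_eq_of_mem hj] at hsub
    exact ((card_le_card hsub).trans hle).not_gt hlt
  have hjS' : j ∈ I.inf S' := by
    by_contra hj
    have : I.inf S' ⊆ I.inf S := fun x hx =>
      (mem_insert.1 (hsub hx)).resolve_left (by rintro rfl; exact hj hx)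
    exact ((card_le_card this).trans hle).not_gt hlt
  obtain ⟨t, ht, hjt⟩ : ∃ t ∈ I, j ∉ S t := by simpa [mem_inf] using hjS
  obtain rfl : t = i := by
    by_contra hti
    exact hjt (hS' t hti ▸ mem_inf.1 hjS' t ht)
  refine ⟨I, ht, ?_, mem_inf.2 fun s hs => ?_⟩
  · have := (card_le_card hsub).trans (card_insert_le _ _)
    unfold IsTight
    omega
  · exact hS' s (ne_of_mem_erase hs) ▸ mem_inf.1 hjS' s (mem_of_mem_erase hs)

theorem IsGenericZP.exists_isGenericZP_update (hS : IsGenericZP S) (hkn : k ≤ n) {i : Fin k}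
    (hi : (S i).card < k - 1) :
    ∃ j ∉ S i, IsGenericZP (Function.update S i (insert j (S i))) := by
  by_contra! hcon
  choose! I hiI hI hjI using fun j (hj : j ∈ (S i)ᶜ) =>
    hS.exists_isTight_of_not_isGenericZP_update (hcon j (mem_compl.1 hj))
  have hne : (S i)ᶜ.Nonempty := by
    rw [← card_pos, card_compl, Fintype.card_fin]
    omega
  -- a tight set through `i` blocking every column outside `S i`
  set I₀ := (S i)ᶜ.inf' hne I
  obtain ⟨hiI₀, hI₀⟩ : i ∈ I₀ ∧ IsTight S I₀ :=
    inf'_induction hne I (p := fun J => i ∈ J ∧ IsTight S J)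
      (fun _ ha _ hb => ⟨mem_inter.2 ⟨ha.1, hb.1⟩, hS.isTight_inter ha.1 hb.1 ha.2 hb.2⟩)
      fun j hj => ⟨hiI j hj, hI j hj⟩
  have hsub : (S i)ᶜ ∪ I₀.inf S ⊆ (I₀.erase i).inf S :=
    union_subset
      (fun j hj => inf_mono (f := S) (erase_subset_erase i (inf'_le I hj)) (hjI j hj))
      (inf_mono (erase_subset i I₀))
  have hdisj : Disjoint (S i)ᶜ (I₀.inf S) :=
    disjoint_left.2 fun x hx hx' => mem_compl.1 hx (inf_le (f := S) hiI₀ hx')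
  have hErase : (I₀.erase i).Nonempty := by
    rw [nonempty_iff_ne_empty, Ne, erase_eq_empty_iff]
    rintro (h | h)
    · exact notMem_empty i (h ▸ hiI₀)
    · simp [IsTight, h] at hI₀
      omega
  have := card_le_card hsub
  have := hS _ hErase
  rw [card_union_of_disjoint hdisj, card_compl, Fintype.card_fin, card_erase_of_mem hiI₀] at *
  unfold IsTight at hI₀
  omega

theorem IsGenericZP.exists_card_eq_of_le {S : Fin k → Finset (Fin n)} (hS : IsGenericZP S)
    (hkn : k ≤ n) :
    ∃ T : Fin k → Finset (Fin n), (∀ i, S i ⊆ T i) ∧ (∀ i, (T i).card = k - 1) ∧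
      IsGenericZP T := by
  by_cases hfull : ∀ i, (S i).card = k - 1
  · exact ⟨S, fun _ => subset_rfl, hfull, hS⟩
  obtain ⟨i, hi⟩ := not_forall.1 hfull
  have hlt := lt_of_le_of_ne (hS.card_le i) hi
  obtain ⟨j, hj, hS'⟩ := hS.exists_isGenericZP_update hkn hlt
  obtain ⟨T, hST, hT⟩ := hS'.exists_card_eq_of_le hkn
  refine ⟨T, fun t => subset_trans ?_ (hST t), hT⟩
  rcases eq_or_ne t i with rfl | hti
  · simp
  · rw [Function.update_of_ne hti]
termination_by ∑ i, (k - 1 - (S i).card)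
decreasing_by
  refine sum_lt_sum (fun t _ => ?_) ⟨i, mem_univ i, ?_⟩
  · rcases eq_or_ne t i with rfl | hti
    · simp only [Function.update_self, card_insert_of_notMem hj]
      omega
    · rw [Function.update_of_ne hti]
  · simp only [Function.update_self, card_insert_of_notMem hj]
    omega

theorem IsGenericZP.exists_perm_forall_notMem {m : ℕ} {T : Fin (m + 1) → Finset (Fin n)}
    (hT : IsGenericZP T) (i : Fin (m + 1)) {e : Fin m → Fin n} (he : Function.Injective e)
    (heT : ∀ l, e l ∈ T i) :
    ∃ π : Equiv.Perm (Fin m), ∀ r, e (π r) ∉ T (i.succAbove r) := by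
  let avoid (r : Fin m) : Finset (Fin m) := {l | e l ∉ T (i.succAbove r)}
  have hHall : ∀ s : Finset (Fin m), s.card ≤ (s.biUnion avoid).card := by
    intro s
    -- Hall's condition for `s` is the pattern condition for the rows `i` and `i.succAbove '' s`.
    set I := insert i (s.image i.succAbove)
    have hIcard : I.card = s.card + 1 := by
      rw [card_insert_of_notMem (by simp [Fin.succAbove_ne]),
        card_image_of_injective _ Fin.succAbove_right_injective]
    set common : Finset (Fin m) := {l | ∀ r ∈ s, e l ∈ T (i.succAbove r)}
    have hcommon : common.card ≤ (I.inf T).card :=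
      card_le_card_of_injOn e (fun l hl => by simpa [common, I, mem_inf, heT] using hl) he.injOn
    have hunion : s.biUnion avoid = commonᶜ := by
      ext l
      simp [avoid, common]
    have := hT I (insert_nonempty _ _)
    have := card_le_univ s
    rw [hunion, card_compl]
    rw [Fintype.card_fin] at *
    omega
  obtain ⟨f, hf, hfT⟩ := (all_card_le_biUnion_card_iff_exists_injective avoid).1 hHall
  exact ⟨Equiv.ofBijective f (Finite.injective_iff_bijective.1 hf),
    fun r => (mem_filter.1 (hfT r)).2⟩

end GenericZeroPattern

/-- The generic matrix attains every generic zero pattern: there is an invertible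
matrix `M` over `K` with `(M·W) i j = 0` for every `i ∈ [k]`, `j ∈ S i`. -/
theorem generic_attains_every_gzp (F : Type*) [Field F] (k n : ℕ)
    (hk : 1 ≤ k) (hkn : k ≤ n)
    (S : Fin k → Finset (Fin n)) (hS : IsGenericZP S) :
    ∃ M : Matrix (Fin k) (Fin k) (genK F k n), IsUnit M.det ∧
      ∀ i j, j ∈ S i → (M * genW F k n) i j = 0 := by
  obtain ⟨m, rfl⟩ : ∃ m, k = m + 1 := ⟨k - 1, by omega⟩
  obtain ⟨T, hST, hTcard, hT⟩ := hS.exists_card_eq_of_le hkn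
  let c i : Fin m ↪o Fin n := (T i).orderEmbOfFin (hTcard i)
  have hcT i l : c i l ∈ T i := orderEmbOfFin_mem _ _ l
  refine ⟨cofactorMatrix (genW F (m + 1) n) fun i => c i, ?_, fun i j hj => ?_⟩
  · have hdet := det_cofactorMatrix_mvPolynomialX_ne_zero (R := F) hcT (fun i => (c i).injective)
      fun i => hT.exists_perm_forall_notMem i (c i).injective (hcT i)
    have hW : genW F (m + 1) n = (mvPolynomialX _ _ F).map (algebraMap _ _) := rfl
    rw [isUnit_iff_ne_zero, hW, ← cofactorMatrix_map, ← RingHom.mapMatrix_apply,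
      ← RingHom.map_det]
    exact (map_ne_zero_iff _ (IsFractionRing.injective _ _)).2 hdet
  · obtain ⟨l, rfl⟩ : j ∈ Set.range (c i) := by
      rw [range_orderEmbOfFin]
      exact hST i hj
    exact cofactorMatrix_mul_apply _ _ i l

end
end

section
/- Assume n ≥ k ≥ 1. Let A_1, …, A_ℓ ⊆ [n] be subsets of size at most k, and let δ_1, …, δ_ℓ be nonnegative integers such that for every nonempty I ⊆ [ℓ], |∩_{i∈I} A_i| ≤ k − Σ_{i∈I} δ_i. Then there exist subsets A'_1, …, A'_ℓ ⊆ [n] with A'_i ⊇ A_i and |A'_i| = k − δ_i for every i ∈ [ℓ], such that for every nonempty I ⊆ [ℓ], |∩_{i∈I} A'_i| ≤ k − Σ_{i∈I} δ_i. (A new generalized Hall's theorem.) -/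
/-!
STATEMENT 5: A new generalized Hall's theorem (Theorem 2.6 / thm:ell-hall).
If |∩_{i∈I} A_i| ≤ k − Σ_{i∈I} δ_i for every nonempty I ⊆ [ℓ], then the A_i can be
extended to sets A'_i ⊇ A_i with |A'_i| = k − δ_i still satisfying all these
inequalities.
-/

open Finset

private lemma tight_inter {n k ℓ : ℕ} (A : Fin ℓ → Finset (Fin n)) (δ : Fin ℓ → ℕ) (i : Fin ℓ)
    (h : ∀ I : Finset (Fin ℓ), I.Nonempty →
        ((I.inf A).card : ℤ) ≤ (k : ℤ) - ∑ i ∈ I, (δ i : ℤ))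
    (I J : Finset (Fin ℓ)) (hiI : i ∈ I) (hiJ : i ∈ J)
    (hI : ((I.inf A).card : ℤ) = (k : ℤ) - ∑ j ∈ I, (δ j : ℤ))
    (hJ : ((J.inf A).card : ℤ) = (k : ℤ) - ∑ j ∈ J, (δ j : ℤ)) :
    (((I ∩ J).inf A).card : ℤ) = (k : ℤ) - ∑ j ∈ I ∩ J, (δ j : ℤ) := by
  have h1 := h (I ∪ J) ⟨i, by simp [hiI]⟩
  have h2 := h (I ∩ J) ⟨i, by simp [hiI, hiJ]⟩
  have e : (I ∪ J).inf A = I.inf A ∩ J.inf A := Finset.inf_union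
  have sub : I.inf A ∪ J.inf A ⊆ (I ∩ J).inf A := by
    intro x hx
    rw [Finset.mem_inf]
    intro j hj
    rcases Finset.mem_union.1 hx with hx | hx
    · exact Finset.mem_inf.1 hx j (Finset.mem_of_mem_inter_left hj)
    · exact Finset.mem_inf.1 hx j (Finset.mem_of_mem_inter_right hj)
  have hcard : (I.inf A).card + (J.inf A).card
      ≤ ((I ∩ J).inf A).card + ((I ∪ J).inf A).card := by
    rw [← Finset.card_union_add_card_inter, ← e]
    exact Nat.add_le_add_right (Finset.card_le_card sub) _
  have hsum : ∑ j ∈ I ∪ J, (δ j : ℤ) + ∑ j ∈ I ∩ J, (δ j : ℤ)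
      = ∑ j ∈ I, (δ j : ℤ) + ∑ j ∈ J, (δ j : ℤ) := Finset.sum_union_inter
  push_cast at hcard
  linarith

private lemma exists_fresh {n : ℕ} (s : Finset (Fin n)) (hs : s.card < n) : ∃ x, x ∉ s := by
  by_contra hc
  push_neg at hc
  have hsub : (univ : Finset (Fin n)) ⊆ s := fun x _ => hc x
  have := Finset.card_le_card hsub
  simp [Finset.card_univ] at this
  omega

private lemma exists_good {n k ℓ : ℕ} (hkn : k ≤ n) (A : Fin ℓ → Finset (Fin n)) (δ : Fin ℓ → ℕ)
    (h : ∀ I : Finset (Fin ℓ), I.Nonempty →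
        ((I.inf A).card : ℤ) ≤ (k : ℤ) - ∑ i ∈ I, (δ i : ℤ))
    (i : Fin ℓ) (hi : (A i).card + δ i < k) :
    ∃ x : Fin n, x ∉ A i ∧ ∀ I : Finset (Fin ℓ), i ∈ I →
      ((I.inf A).card : ℤ) = (k : ℤ) - ∑ j ∈ I, (δ j : ℤ) →
      ∃ j ∈ I, j ≠ i ∧ x ∉ A j := by
  classical
  set 𝒯 : Finset (Finset (Fin ℓ)) := univ.filter
    (fun I => i ∈ I ∧ ((I.inf A).card : ℤ) = (k : ℤ) - ∑ j ∈ I, (δ j : ℤ)) with h𝒯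
  by_cases hT : 𝒯.Nonempty
  · obtain ⟨M, hM, hmin⟩ := 𝒯.exists_min_image card hT
    obtain ⟨hiM, htM⟩ := (Finset.mem_filter.1 hM).2
    have hMsub : ∀ I ∈ 𝒯, M ⊆ I := by
      intro I hI
      obtain ⟨hiI, htI⟩ := (Finset.mem_filter.1 hI).2
      have hMI : M ∩ I ∈ 𝒯 := by
        rw [h𝒯, Finset.mem_filter]
        exact ⟨Finset.mem_univ _, Finset.mem_inter.2 ⟨hiM, hiI⟩,
          tight_inter A δ i h M I hiM hiI htM htI⟩
      have hle := hmin _ hMI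
      have heq := Finset.eq_of_subset_of_card_le Finset.inter_subset_left hle
      intro y hy
      exact Finset.mem_of_mem_inter_right (heq ▸ hy)
    -- M ≠ {i}
    have hne : (M.erase i).Nonempty := by
      rcases Finset.eq_empty_or_nonempty (M.erase i) with he | hne
      · exfalso
        have : M = {i} := by
          apply Finset.eq_singleton_iff_unique_mem.2
          refine ⟨hiM, fun y hy => ?_⟩
          by_contra hyne
          exact (Finset.notMem_empty y) (he ▸ Finset.mem_erase.2 ⟨hyne, hy⟩)
        rw [this] at htM
        simp at htM
        omega
      · exact hne
    set C := (M.erase i).inf A with hC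
    have hCb : ((C.card : ℤ)) ≤ (k : ℤ) - ∑ j ∈ M.erase i, (δ j : ℤ) := h _ hne
    have hMi : A i ∩ C = M.inf A := by
      conv_rhs => rw [← Finset.insert_erase hiM]
      rw [Finset.inf_insert]
      rfl
    have hsum : (δ i : ℤ) + ∑ j ∈ M.erase i, (δ j : ℤ) = ∑ j ∈ M, (δ j : ℤ) :=
      Finset.add_sum_erase M (fun j => (δ j : ℤ)) hiM
    have hcardu : ((A i ∪ C).card : ℤ) < (k : ℤ) := by
      have hue := Finset.card_union_add_card_inter (A i) C
      rw [hMi] at hue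
      have hue' : ((A i ∪ C).card : ℤ) + ((M.inf A).card : ℤ)
          = ((A i).card : ℤ) + (C.card : ℤ) := by exact_mod_cast hue
      have hAi : ((A i).card : ℤ) + (δ i : ℤ) < k := by exact_mod_cast hi
      linarith [htM]
    obtain ⟨x, hx⟩ : ∃ x, x ∉ A i ∪ C := by
      apply exists_fresh
      have : ((A i ∪ C).card : ℤ) < (n : ℤ) := lt_of_lt_of_le hcardu (by exact_mod_cast hkn)
      exact_mod_cast this
    rw [Finset.mem_union] at hx
    push_neg at hx
    refine ⟨x, hx.1, fun I hiI htI => ?_⟩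
    have hIT : I ∈ 𝒯 := by
      rw [h𝒯, Finset.mem_filter]
      exact ⟨Finset.mem_univ _, hiI, htI⟩
    have hMI := hMsub I hIT
    have : ∃ j ∈ M.erase i, x ∉ A j := by
      by_contra hc
      push_neg at hc
      exact hx.2 (Finset.mem_inf.2 hc)
    obtain ⟨j, hj, hxj⟩ := this
    obtain ⟨hjne, hjM⟩ := Finset.mem_erase.1 hj
    exact ⟨j, hMI hjM, hjne, hxj⟩
  · -- no tight sets at all
    obtain ⟨x, hx⟩ : ∃ x, x ∉ A i := by
      apply exists_fresh
      omega
    refine ⟨x, hx, fun I hiI htI => absurd ?_ hT⟩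
    exact ⟨I, by rw [h𝒯, Finset.mem_filter]; exact ⟨Finset.mem_univ _, hiI, htI⟩⟩

private lemma hall_aux (n k ℓ : ℕ) (hkn : k ≤ n) (δ : Fin ℓ → ℕ) :
    ∀ (d : ℕ) (A : Fin ℓ → Finset (Fin n)),
      (∑ i, (k - δ i - (A i).card)) = d →
      (∀ I : Finset (Fin ℓ), I.Nonempty →
        ((I.inf A).card : ℤ) ≤ (k : ℤ) - ∑ i ∈ I, (δ i : ℤ)) →
      ∃ A' : Fin ℓ → Finset (Fin n),
        (∀ i, A i ⊆ A' i ∧ (A' i).card = k - δ i) ∧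
        (∀ I : Finset (Fin ℓ), I.Nonempty →
          ((I.inf A').card : ℤ) ≤ (k : ℤ) - ∑ i ∈ I, (δ i : ℤ)) := by
  intro d
  induction d with
  | zero =>
    intro A hd h
    refine ⟨A, fun i => ⟨subset_rfl, ?_⟩, h⟩
    have h1 := h {i} ⟨i, Finset.mem_singleton_self i⟩
    simp only [Finset.inf_singleton, Finset.sum_singleton] at h1
    have h1' : (A i).card + δ i ≤ k := by exact_mod_cast (by linarith : ((A i).card : ℤ) + δ i ≤ k)
    have hz : k - δ i - (A i).card = 0 :=
      (Finset.sum_eq_zero_iff.1 hd) i (Finset.mem_univ i)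
    omega
  | succ d ih =>
    intro A hd h
    classical
    have hex : ∃ i, k - δ i - (A i).card ≠ 0 := by
      by_contra hc
      push_neg at hc
      rw [Finset.sum_eq_zero (fun i _ => hc i)] at hd
      omega
    obtain ⟨i, hi0⟩ := hex
    have hi : (A i).card + δ i < k := by omega
    obtain ⟨x, hx, hxT⟩ := exists_good hkn A δ h i hi
    set A'' : Fin ℓ → Finset (Fin n) := Function.update A i (insert x (A i)) with hA''
    have hA''i : A'' i = insert x (A i) := Function.update_self _ _ _
    have hA''j : ∀ j, j ≠ i → A'' j = A j := fun j hj => Function.update_of_ne hj _ _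
    have hsubA : ∀ j, A j ⊆ A'' j := by
      intro j
      by_cases hji : j = i
      · subst hji; rw [hA''i]; exact Finset.subset_insert _ _
      · rw [hA''j j hji]
    -- constraints for A''
    have h'' : ∀ I : Finset (Fin ℓ), I.Nonempty →
        ((I.inf A'').card : ℤ) ≤ (k : ℤ) - ∑ j ∈ I, (δ j : ℤ) := by
      intro I hI
      by_cases hiI : i ∈ I
      · have hsub : I.inf A'' ⊆ insert x (I.inf A) := by
          intro y hy
          by_cases hyx : y = x
          · subst hyx; exact Finset.mem_insert_self _ _
          · apply Finset.mem_insert_of_mem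
            rw [Finset.mem_inf]
            intro j hj
            have hyj := Finset.mem_inf.1 hy j hj
            by_cases hji : j = i
            · subst hji
              rw [hA''i] at hyj
              rcases Finset.mem_insert.1 hyj with h' | h'
              · exact absurd h' hyx
              · exact h'
            · rwa [hA''j j hji] at hyj
        by_cases htight : ((I.inf A).card : ℤ) = (k : ℤ) - ∑ j ∈ I, (δ j : ℤ)
        · obtain ⟨j, hjI, hjne, hxj⟩ := hxT I hiI htight
          have hxnot : x ∉ I.inf A'' := by
            intro hmem
            have := Finset.mem_inf.1 hmem j hjI
            rw [hA''j j hjne] at this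
            exact hxj this
          have hsub' : I.inf A'' ⊆ I.inf A := by
            intro y hy
            rcases Finset.mem_insert.1 (hsub hy) with h' | h'
            · exact absurd (h' ▸ hy) hxnot
            · exact h'
          calc ((I.inf A'').card : ℤ) ≤ ((I.inf A).card : ℤ) := by
                exact_mod_cast Finset.card_le_card hsub'
            _ ≤ _ := h I hI
        · have hlt : ((I.inf A).card : ℤ) < (k : ℤ) - ∑ j ∈ I, (δ j : ℤ) :=
            lt_of_le_of_ne (h I hI) htight
          have : ((I.inf A'').card : ℤ) ≤ ((I.inf A).card : ℤ) + 1 := by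
            have := Finset.card_le_card hsub
            have h2 := Finset.card_insert_le x (I.inf A)
            exact_mod_cast le_trans this h2
          linarith
      · have heq : I.inf A'' = I.inf A :=
          Finset.inf_congr rfl (fun j hj => hA''j j (fun hji => hiI (hji ▸ hj)))
        rw [heq]
        exact h I hI
    have hcard'' : (A'' i).card = (A i).card + 1 := by
      rw [hA''i, Finset.card_insert_of_notMem hx]
    have hd'' : (∑ j, (k - δ j - (A'' j).card)) = d := by
      rw [← Finset.add_sum_erase _ _ (Finset.mem_univ i)] at hd ⊢
      have hrest : ∑ j ∈ univ.erase i, (k - δ j - (A'' j).card)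
          = ∑ j ∈ univ.erase i, (k - δ j - (A j).card) := by
        apply Finset.sum_congr rfl
        intro j hj
        rw [hA''j j (Finset.mem_erase.1 hj).1]
      rw [hrest, hcard'']
      omega
    obtain ⟨A', hA', h'⟩ := ih A'' hd'' h''
    exact ⟨A', fun j => ⟨(hsubA j).trans (hA' j).1, (hA' j).2⟩, h'⟩

theorem generalized_hall (n k ℓ : ℕ) (hk : 1 ≤ k) (hkn : k ≤ n)
    (A : Fin ℓ → Finset (Fin n)) (hA : ∀ i, (A i).card ≤ k)
    (δ : Fin ℓ → ℕ)
    (h : ∀ I : Finset (Fin ℓ), I.Nonempty →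
        ((I.inf A).card : ℤ) ≤ (k : ℤ) - ∑ i ∈ I, (δ i : ℤ)) :
    ∃ A' : Fin ℓ → Finset (Fin n),
      (∀ i, A i ⊆ A' i ∧ (A' i).card = k - δ i) ∧
      (∀ I : Finset (Fin ℓ), I.Nonempty →
        ((I.inf A').card : ℤ) ≤ (k : ℤ) - ∑ i ∈ I, (δ i : ℤ)) := by
  exact hall_aux n k ℓ hkn δ (∑ i, (k - δ i - (A i).card)) A rfl h
end

section
/- Assume n ≥ k ≥ 1 and let d be an integer with 0 ≤ d ≤ k. Let A_1, …, A_ℓ ⊆ [n] be subsets each of size at most k. Then the following are equivalent: (b) there exist nonnegative integers δ_1, …, δ_ℓ with Σ_{i=1}^ℓ δ_i = k − d such that for every nonempty I ⊆ [ℓ], |∩_{i∈I} A_i| ≤ k − Σ_{i∈I} δ_i; (c) for every partition P_1 ⊔ ⋯ ⊔ P_s = [ℓ] into nonempty parts, Σ_{i=1}^s |A_{P_i}| ≤ (s−1)·k + d. -/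
/-!
STATEMENT 7: Lemma 2.9 (lem:hall-part), equivalence (b) ⟺ (c). For sets
A_1, …, A_ℓ ⊆ [n] of size at most k and 0 ≤ d ≤ k:
(b) ∃ δ_i ≥ 0 with Σδ_i = k − d and |A_I| ≤ k − Σ_{i∈I} δ_i for every nonempty I;
(c) Σ_{i=1}^s |A_{P_i}| ≤ (s−1)k + d for every partition P_1 ⊔ ⋯ ⊔ P_s = [ℓ]
    into nonempty parts.
-/

open Finset

/-- Shrinking lemma: any nonnegative integer vector can be decreased pointwise
to achieve any smaller total sum. -/
lemma hall_aux_shrink {ℓ : ℕ} (m : ℕ) : ∀ (t : ℕ) (f : Fin ℓ → ℕ), (∑ i, f i) = m + t →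
    ∃ g : Fin ℓ → ℕ, (∀ i, g i ≤ f i) ∧ (∑ i, g i) = m := by
  intro t
  induction t with
  | zero => exact fun f h => ⟨f, fun i => le_rfl, by simpa using h⟩
  | succ t ih =>
    intro f h
    have hpos : ∃ i, f i ≠ 0 := by
      by_contra hc
      push_neg at hc
      simp [hc] at h
    obtain ⟨i, hi⟩ := hpos
    have herase := Finset.add_sum_erase Finset.univ f (Finset.mem_univ i)
    have hsum : ∑ j, Function.update f i (f i - 1) j = m + t := by
      rw [Finset.sum_update_of_mem (Finset.mem_univ i)]
      rw [Finset.sdiff_singleton_eq_erase]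
      omega
    obtain ⟨g, hg1, hg2⟩ := ih _ hsum
    refine ⟨g, fun j => (hg1 j).trans ?_, hg2⟩
    rcases eq_or_ne j i with rfl | hj
    · simp
    · simp [Function.update_of_ne hj]

/-- Submodularity of `I ↦ |A_I|` (in the supermodular direction). -/
lemma hall_aux_submod {n ℓ : ℕ} (A : Fin ℓ → Finset (Fin n)) (I J : Finset (Fin ℓ)) :
    ((I.inf A).card : ℤ) + (J.inf A).card ≤ ((I ∪ J).inf A).card + ((I ∩ J).inf A).card := by
  have h1 : (I ∪ J).inf A = I.inf A ⊓ J.inf A := Finset.inf_union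
  have h2 : I.inf A ⊔ J.inf A ≤ (I ∩ J).inf A :=
    sup_le (Finset.inf_mono Finset.inter_subset_left) (Finset.inf_mono Finset.inter_subset_right)
  have h3 := Finset.card_union_add_card_inter (I.inf A) (J.inf A)
  have h4 : (I.inf A ∪ J.inf A).card ≤ ((I ∩ J).inf A).card := Finset.card_le_card h2
  rw [h1]
  have : (I.inf A ⊓ J.inf A) = I.inf A ∩ J.inf A := rfl
  rw [this]
  push_cast
  omega

theorem hall_partition_equivalence (n k ℓ d : ℕ)
    (hk : 1 ≤ k) (hkn : k ≤ n) (hd : d ≤ k)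
    (A : Fin ℓ → Finset (Fin n)) (hA : ∀ i, (A i).card ≤ k) :
    (∃ δ : Fin ℓ → ℕ, (∑ i, δ i) = k - d ∧
        ∀ I : Finset (Fin ℓ), I.Nonempty →
          ((I.inf A).card : ℤ) ≤ (k : ℤ) - ∑ i ∈ I, (δ i : ℤ)) ↔
    (∀ P : Finpartition (Finset.univ : Finset (Fin ℓ)),
        (∑ p ∈ P.parts, ((p.inf A).card : ℤ)) ≤ ((P.parts.card : ℤ) - 1) * k + d) := by
  classical
  -- basic facts
  have hcardle : ∀ I : Finset (Fin ℓ), I.Nonempty → ((I.inf A).card : ℤ) ≤ k := by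
    intro I ⟨i, hi⟩
    have : I.inf A ≤ A i := Finset.inf_le hi
    exact_mod_cast (Finset.card_le_card this).trans (hA i)
  constructor
  · -- (b) ⇒ (c)
    rintro ⟨δ, hS, hfe⟩ P
    have hdisj : (↑P.parts : Set (Finset (Fin ℓ))).PairwiseDisjoint id :=
      P.supIndep.pairwiseDisjoint
    have hbU : P.parts.biUnion id = Finset.univ := by
      rw [← Finset.sup_eq_biUnion]; exact P.sup_parts
    have hsum : ∑ p ∈ P.parts, ∑ i ∈ p, (δ i : ℤ) = ∑ i, (δ i : ℤ) := by
      have h := (Finset.sum_biUnion (f := fun i => (δ i : ℤ)) hdisj).symm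
      rwa [hbU] at h
    have hS' : (∑ i, (δ i : ℤ)) = (k : ℤ) - d := by
      have h : ((∑ i, δ i : ℕ) : ℤ) = ((k - d : ℕ) : ℤ) := by exact_mod_cast hS
      push_cast [Nat.cast_sub hd] at h
      simpa using h
    have step : ∀ p ∈ P.parts, ((p.inf A).card : ℤ) ≤ (k : ℤ) - ∑ i ∈ p, (δ i : ℤ) :=
      fun p hp => hfe p (P.nonempty_of_mem_parts hp)
    calc ∑ p ∈ P.parts, ((p.inf A).card : ℤ)
        ≤ ∑ p ∈ P.parts, ((k : ℤ) - ∑ i ∈ p, (δ i : ℤ)) := Finset.sum_le_sum step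
      _ = P.parts.card * k - ∑ p ∈ P.parts, ∑ i ∈ p, (δ i : ℤ) := by
          rw [Finset.sum_sub_distrib, Finset.sum_const, nsmul_eq_mul]
      _ = P.parts.card * k - ((k : ℤ) - d) := by rw [hsum, hS']
      _ = ((P.parts.card : ℤ) - 1) * k + d := by ring
  · -- (c) ⇒ (b)
    intro hc
    -- the feasibility predicate
    set g : Finset (Fin ℓ) → ℤ := fun I => (k : ℤ) - ((I.inf A).card : ℤ) with hgdef
    have hg0 : ∀ I : Finset (Fin ℓ), I.Nonempty → 0 ≤ g I := by
      intro I hI; have := hcardle I hI; simp [hgdef]; omega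
    -- pick a feasible δ with maximal total sum, among δ ≤ k pointwise
    let T : Finset (Fin ℓ → Fin (k + 1)) :=
      Finset.univ.filter (fun f => ∀ I : Finset (Fin ℓ), I.Nonempty →
        (∑ i ∈ I, ((f i : ℕ) : ℤ)) ≤ g I)
    have hT0 : (fun _ => (⟨0, by omega⟩ : Fin (k+1))) ∈ T := by
      simp only [T, Finset.mem_filter, Finset.mem_univ, true_and]
      intro I hI
      simpa using hg0 I hI
    obtain ⟨f, hfT, hfmax⟩ := T.exists_max_image (fun f => ∑ i, (f i : ℕ)) ⟨_, hT0⟩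
    set δ : Fin ℓ → ℕ := fun i => (f i : ℕ) with hδdef
    have hfe : ∀ I : Finset (Fin ℓ), I.Nonempty → (∑ i ∈ I, (δ i : ℤ)) ≤ g I := by
      simpa only [T, Finset.mem_filter, Finset.mem_univ, true_and] using hfT
    -- every element lies in a tight set
    have htight : ∀ i : Fin ℓ, ∃ I, i ∈ I ∧ (∑ j ∈ I, (δ j : ℤ)) = g I := by
      intro i
      by_contra hcon
      push_neg at hcon
      have hstrict : ∀ I : Finset (Fin ℓ), i ∈ I → (∑ j ∈ I, (δ j : ℤ)) + 1 ≤ g I := by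
        intro I hiI
        have h1 := hfe I ⟨i, hiI⟩
        have h2 := hcon I hiI
        omega
      have hik : δ i + 1 < k + 1 := by
        have := hstrict {i} (Finset.mem_singleton_self i)
        have hc0 : (0 : ℤ) ≤ (({i} : Finset (Fin ℓ)).inf A).card := by positivity
        simp [hgdef] at this
        omega
      set f' : Fin ℓ → Fin (k+1) := Function.update f i ⟨δ i + 1, hik⟩ with hf'def
      have hval : ∀ j, j ≠ i → ((f' j : ℕ) : ℤ) = (δ j : ℤ) := by
        intro j hj; simp [hf'def, Function.update_of_ne hj, hδdef]
      have hvali : ((f' i : ℕ) : ℤ) = (δ i : ℤ) + 1 := by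
        simp [hf'def]
      have hsum' : ∀ I : Finset (Fin ℓ), i ∈ I →
          (∑ j ∈ I, ((f' j : ℕ) : ℤ)) = (∑ j ∈ I, (δ j : ℤ)) + 1 := by
        intro I hiI
        rw [← Finset.sum_erase_add I _ hiI, ← Finset.sum_erase_add I (fun j => (δ j : ℤ)) hiI,
          hvali]
        rw [Finset.sum_congr rfl (fun j hj => hval j (Finset.ne_of_mem_erase hj))]
        ring
      have hf'T : f' ∈ T := by
        simp only [T, Finset.mem_filter, Finset.mem_univ, true_and]
        intro I hI
        by_cases hiI : i ∈ I
        · rw [hsum' I hiI]; exact hstrict I hiI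
        · rw [Finset.sum_congr rfl (fun j hj => hval j (by rintro rfl; exact hiI hj))]
          exact hfe I hI
      have := hfmax f' hf'T
      have huniv : (∑ j, ((f' j : ℕ) : ℤ)) = (∑ j, (δ j : ℤ)) + 1 :=
        hsum' Finset.univ (Finset.mem_univ i)
      have h1 : (∑ j, ((f' j : ℕ) : ℤ)) ≤ (∑ j, ((f j : ℕ) : ℤ)) := by exact_mod_cast this
      simp only [hδdef] at huniv
      omega
    -- tight sets are closed under unions meeting in a point
    have hUnion : ∀ I J : Finset (Fin ℓ),
        (∑ j ∈ I, (δ j : ℤ)) = g I → (∑ j ∈ J, (δ j : ℤ)) = g J → (I ∩ J).Nonempty →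
        (∑ j ∈ I ∪ J, (δ j : ℤ)) = g (I ∪ J) := by
      intro I J hI hJ hIJ
      have hsub := hall_aux_submod A I J
      have h1 := hfe (I ∪ J) (hIJ.mono (Finset.inter_subset_left.trans Finset.subset_union_left))
      have h2 := hfe (I ∩ J) hIJ
      have h3 := Finset.sum_union_inter (s₁ := I) (s₂ := J) (f := fun j => (δ j : ℤ))
      simp only [hgdef] at *
      omega
    -- the maximal tight set containing i
    set M : Fin ℓ → Finset (Fin ℓ) := fun i =>
      (Finset.univ.filter (fun I => i ∈ I ∧ (∑ j ∈ I, (δ j : ℤ)) = g I)).sup id with hMdef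
    have hkey : ∀ (i : Fin ℓ) (S : Finset (Finset (Fin ℓ))),
        (∀ I ∈ S, i ∈ I ∧ (∑ j ∈ I, (δ j : ℤ)) = g I) → S.Nonempty →
        i ∈ S.sup id ∧ (∑ j ∈ S.sup id, (δ j : ℤ)) = g (S.sup id) := by
      intro i S
      induction S using Finset.cons_induction with
      | empty => intro _ h; exact absurd h (by simp)
      | cons a s ha ih =>
        intro hall _
        rcases s.eq_empty_or_nonempty with rfl | hs
        · simpa using hall a (by simp)
        · have hIH := ih (fun I hI => hall I (Finset.mem_cons_of_mem hI)) hs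
          have haa := hall a (Finset.mem_cons_self a s)
          rw [Finset.sup_cons]
          have hsup : (id a ⊔ s.sup id) = a ∪ s.sup id := rfl
          rw [hsup]
          constructor
          · exact Finset.mem_union_left _ haa.1
          · exact hUnion a (s.sup id) haa.2 hIH.2
              ⟨i, Finset.mem_inter.2 ⟨haa.1, hIH.1⟩⟩
    have hM : ∀ i, i ∈ M i ∧ (∑ j ∈ M i, (δ j : ℤ)) = g (M i) := by
      intro i
      obtain ⟨I, hiI, htI⟩ := htight i
      have hne : (Finset.univ.filter
          (fun J => i ∈ J ∧ (∑ j ∈ J, (δ j : ℤ)) = g J)).Nonempty :=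
        ⟨I, Finset.mem_filter.2 ⟨Finset.mem_univ _, hiI, htI⟩⟩
      exact hkey i _ (fun J hJ => (Finset.mem_filter.1 hJ).2) hne
    have hMmax : ∀ i (J : Finset (Fin ℓ)), i ∈ J → (∑ j ∈ J, (δ j : ℤ)) = g J → J ⊆ M i := by
      intro i J hiJ htJ
      have hJmem : J ∈ Finset.univ.filter
          (fun J => i ∈ J ∧ (∑ j ∈ J, (δ j : ℤ)) = g J) :=
        Finset.mem_filter.2 ⟨Finset.mem_univ _, hiJ, htJ⟩
      exact Finset.le_sup (f := id) hJmem
    have hMdisj : ∀ i j, M i = M j ∨ Disjoint (M i) (M j) := by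
      intro i j
      by_cases hdis : Disjoint (M i) (M j)
      · exact Or.inr hdis
      · left
        obtain ⟨x, hx⟩ := Finset.not_disjoint_iff.1 hdis
        have htU : (∑ l ∈ M i ∪ M j, (δ l : ℤ)) = g (M i ∪ M j) :=
          hUnion _ _ (hM i).2 (hM j).2 ⟨x, Finset.mem_inter.2 ⟨hx.1, hx.2⟩⟩
        have h1 : M i ∪ M j ⊆ M i :=
          hMmax i _ (Finset.mem_union_left _ (hM i).1) htU
        have h2 : M i ∪ M j ⊆ M j :=
          hMmax j _ (Finset.mem_union_right _ (hM j).1) htU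
        exact Finset.Subset.antisymm (Finset.subset_union_left.trans h2)
          (Finset.subset_union_right.trans h1)
    -- assemble the partition into maximal tight sets
    set P : Finpartition (Finset.univ : Finset (Fin ℓ)) :=
      { parts := Finset.univ.image M
        supIndep := by
          rw [Finset.supIndep_iff_pairwiseDisjoint]
          intro p hp q hq hpq
          obtain ⟨i, -, rfl⟩ := Finset.mem_image.1 hp
          obtain ⟨j, -, rfl⟩ := Finset.mem_image.1 hq
          exact (hMdisj i j).resolve_left hpq
        sup_parts := by
          apply le_antisymm
          · exact Finset.sup_le (fun p _ => Finset.subset_univ p)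
          · intro x _
            have hx : x ∈ M x := (hM x).1
            exact Finset.mem_sup.2 ⟨M x, Finset.mem_image_of_mem M (Finset.mem_univ x), hx⟩
        bot_notMem := by
          simp only [Finset.bot_eq_empty, Finset.mem_image]
          rintro ⟨i, -, hMi⟩
          exact absurd ((hM i).1) (by rw [hMi]; simp) } with hPdef
    have hcP := hc P
    have hdisjP : (↑P.parts : Set (Finset (Fin ℓ))).PairwiseDisjoint id :=
      P.supIndep.pairwiseDisjoint
    have hbU : P.parts.biUnion id = Finset.univ := by
      rw [← Finset.sup_eq_biUnion]; exact P.sup_parts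
    have hsumP : ∑ p ∈ P.parts, ∑ i ∈ p, (δ i : ℤ) = ∑ i, (δ i : ℤ) := by
      have h := (Finset.sum_biUnion (f := fun i => (δ i : ℤ)) hdisjP).symm
      rwa [hbU] at h
    have htP : ∀ p ∈ P.parts, (∑ j ∈ p, (δ j : ℤ)) = g p := by
      intro p hp
      obtain ⟨i, -, rfl⟩ : ∃ i, i ∈ Finset.univ ∧ M i = p := by
        simpa [hPdef, Finset.mem_image] using hp
      exact (hM i).2
    have hsumg : ∑ i, (δ i : ℤ) = P.parts.card * k - ∑ p ∈ P.parts, ((p.inf A).card : ℤ) := by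
      rw [← hsumP, Finset.sum_congr rfl htP]
      simp only [hgdef]
      rw [Finset.sum_sub_distrib, Finset.sum_const, nsmul_eq_mul]
    have hge : (k : ℤ) - d ≤ ∑ i, (δ i : ℤ) := by
      rw [hsumg]; linarith [hcP]
    -- shrink δ to have total sum exactly k - d
    have hge' : k - d ≤ ∑ i, δ i := by
      have h1 : ((k - d : ℕ) : ℤ) ≤ ((∑ i, δ i : ℕ) : ℤ) := by
        push_cast [Nat.cast_sub hd]
        exact_mod_cast hge
      exact_mod_cast h1
    obtain ⟨t, ht⟩ := Nat.exists_eq_add_of_le hge'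
    obtain ⟨δ', hδ'le, hδ'sum⟩ := hall_aux_shrink (k - d) t δ ht
    refine ⟨δ', hδ'sum, fun I hI => ?_⟩
    have h1 : (∑ i ∈ I, (δ' i : ℤ)) ≤ ∑ i ∈ I, (δ i : ℤ) :=
      Finset.sum_le_sum (fun i _ => by exact_mod_cast hδ'le i)
    have h2 := hfe I hI
    simp only [hgdef] at h2
    omega
end
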